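/- arXiv:2601.21423 — 5 statements merged into one kernel-verified Lean document; each statement's English description precedes it below -/
import Mathlib

section
/- Let F_k = {f_2, f_4, ..., f_{2k}} be the set of the first k even-indexed Fibonacci numbers (with f_1 = f_2 = 1). Then every integer m with 1 ≤ m ≤ f_{2k+1} - 1 can be written as Σ_{i=1}^k λ_i f_{2i} with nonnegative integers λ_i satisfying Σ λ_i ≤ k. -/
/-- `i` is a sum of at most `s` elements of `A` (with repetition). -/
def Reachable (A : Finset ℕ) (s i : ℕ) : Prop :=
  ∃ f : ℕ → ℕ, (∑ x ∈ A, f x) ≤ s ∧ (∑ x ∈ A, f x * x) = i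

/-- The s-range of a stamp basis `A`. -/
noncomputable def srange (A : Finset ℕ) (s : ℕ) : ℕ :=
  sSup {n | ∀ i, 1 ≤ i → i ≤ n → Reachable A s i}

/-- The extremal s-range over bases of `k` distinct positive denominations. -/
noncomputable def exrange (k s : ℕ) : ℕ :=
  sSup {n | ∃ A : Finset ℕ, A.card = k ∧ (∀ a ∈ A, 0 < a) ∧ n = srange A s}

theorem fib_basis_lower (k : ℕ) (hk : 0 < k) :
    ∀ m : ℕ, 1 ≤ m → m ≤ Nat.fib (2 * k + 1) - 1 →
      ∃ lam : ℕ → ℕ, (∑ i ∈ Finset.Icc 1 k, lam i) ≤ k ∧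
        (∑ i ∈ Finset.Icc 1 k, lam i * Nat.fib (2 * i)) = m := by
  induction k with
  | zero => omega
  | succ k ih =>
    intro m hm1 hm2
    rcases Nat.eq_zero_or_pos k with hk0 | hkpos
    · subst hk0
      have h3 : Nat.fib 3 = 2 := by decide
      have hm : m = 1 := by simp only [h3, show 2*1+1 = 3 from rfl] at hm2; omega
      exact ⟨fun _ => 1, by simp [hm]⟩
    have hfib3 : Nat.fib (2*(k+1)+1) = Nat.fib (2*k+2) + Nat.fib (2*k+1) := by
      rw [show 2*(k+1)+1 = 2*k+1+2 from by ring, Nat.fib_add_two,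
        show 2*k+1+1 = 2*k+2 from by ring]
      omega
    have hfib2 : Nat.fib (2*k+2) = Nat.fib (2*k+1) + Nat.fib (2*k) := by
      have := Nat.fib_add_two (n := 2*k)
      rw [this]; omega
    have hpos1 : 1 ≤ Nat.fib (2*k+1) := Nat.fib_pos.mpr (by omega)
    have hpos0 : 1 ≤ Nat.fib (2*k) := Nat.fib_pos.mpr (by omega)
    have hmul : 2*(k+1) = 2*k+2 := by ring
    have hm2' : m ≤ Nat.fib (2*k+2) + Nat.fib (2*k+1) - 1 := by
      rw [hfib3] at hm2; exact hm2
    have hIcc : Finset.Icc 1 (k+1) = insert (k+1) (Finset.Icc 1 k) := by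
      ext x; simp only [Finset.mem_Icc, Finset.mem_insert]; omega
    by_cases h1 : m ≤ Nat.fib (2*k+1) - 1
    · obtain ⟨lam, hs, hw⟩ := ih hkpos m hm1 h1
      refine ⟨fun i => if i = k+1 then 0 else lam i, ?_, ?_⟩
      · rw [hIcc, Finset.sum_insert (by simp), if_pos rfl]
        have he : (∑ i ∈ Finset.Icc 1 k, if i = k+1 then 0 else lam i)
            = ∑ i ∈ Finset.Icc 1 k, lam i := by
          refine Finset.sum_congr rfl fun i hi => ?_
          have : i ≤ k := (Finset.mem_Icc.mp hi).2
          rw [if_neg (by omega)]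
        omega
      · rw [hIcc, Finset.sum_insert (by simp)]; beta_reduce; rw [if_pos rfl, zero_mul, zero_add]
        calc (∑ i ∈ Finset.Icc 1 k, (if i = k+1 then 0 else lam i) * Nat.fib (2*i))
            = ∑ i ∈ Finset.Icc 1 k, lam i * Nat.fib (2*i) := by
              refine Finset.sum_congr rfl fun i hi => ?_
              have : i ≤ k := (Finset.mem_Icc.mp hi).2
              rw [if_neg (by omega)]
          _ = m := hw
    · by_cases h2 : Nat.fib (2*k+2) ≤ m
      · set m' := m - Nat.fib (2*k+2) with hm'
        have hm'le : m' ≤ Nat.fib (2*k+1) - 1 := by omega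
        rcases Nat.eq_zero_or_pos m' with h0 | h0
        · refine ⟨fun i => if i = k+1 then 1 else 0, ?_, ?_⟩
          · rw [hIcc, Finset.sum_insert (by simp), if_pos rfl]
            have he : (∑ i ∈ Finset.Icc 1 k, if i = k+1 then 1 else 0) = 0 := by
              refine Finset.sum_eq_zero fun i hi => ?_
              have : i ≤ k := (Finset.mem_Icc.mp hi).2
              rw [if_neg (by omega)]
            omega
          · rw [hIcc, Finset.sum_insert (by simp)]; beta_reduce; rw [if_pos rfl, one_mul]
            have he : (∑ i ∈ Finset.Icc 1 k, (if i = k+1 then 1 else 0) * Nat.fib (2*i)) = 0 := by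
              refine Finset.sum_eq_zero fun i hi => ?_
              have : i ≤ k := (Finset.mem_Icc.mp hi).2
              rw [if_neg (by omega), zero_mul]
            rw [he, add_zero, hmul]
            omega
        · obtain ⟨lam, hs, hw⟩ := ih hkpos m' h0 hm'le
          refine ⟨fun i => if i = k+1 then 1 else lam i, ?_, ?_⟩
          · rw [hIcc, Finset.sum_insert (by simp), if_pos rfl]
            have he : (∑ i ∈ Finset.Icc 1 k, if i = k+1 then 1 else lam i)
                = ∑ i ∈ Finset.Icc 1 k, lam i := by
              refine Finset.sum_congr rfl fun i hi => ?_
              have : i ≤ k := (Finset.mem_Icc.mp hi).2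
              rw [if_neg (by omega)]
            omega
          · rw [hIcc, Finset.sum_insert (by simp)]; beta_reduce; rw [if_pos rfl, one_mul]
            have he : (∑ i ∈ Finset.Icc 1 k, (if i = k+1 then 1 else lam i) * Nat.fib (2*i))
                = ∑ i ∈ Finset.Icc 1 k, lam i * Nat.fib (2*i) := by
              refine Finset.sum_congr rfl fun i hi => ?_
              have : i ≤ k := (Finset.mem_Icc.mp hi).2
              rw [if_neg (by omega)]
            rw [he, hw, hmul]
            omega
      · set m' := m - Nat.fib (2*k) with hm'
        have hmlb : Nat.fib (2*k+1) ≤ m := by omega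
        have hfibodd : Nat.fib (2*k) < Nat.fib (2*k+1) := by
          have h4 := Nat.fib_add_two (n := 2*k-1)
          have h1' : 1 ≤ Nat.fib (2*k-1) := Nat.fib_pos.mpr (by omega)
          have h2' : 2*k-1+2 = 2*k+1 := by omega
          have h3' : 2*k-1+1 = 2*k := by omega
          rw [h2', h3'] at h4
          omega
        have h0 : 1 ≤ m' := by omega
        have hm'le : m' ≤ Nat.fib (2*k+1) - 1 := by omega
        obtain ⟨lam, hs, hw⟩ := ih hkpos m' h0 hm'le
        have hmem : k ∈ Finset.Icc 1 k := Finset.mem_Icc.mpr ⟨hkpos, le_refl k⟩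
        refine ⟨fun i => if i = k+1 then 0 else if i = k then lam i + 1 else lam i, ?_, ?_⟩
        · rw [hIcc, Finset.sum_insert (by simp), if_pos rfl]
          have he : (∑ i ∈ Finset.Icc 1 k,
              if i = k+1 then 0 else if i = k then lam i + 1 else lam i)
              = (∑ i ∈ Finset.Icc 1 k, lam i) + 1 := by
            have key : ∀ i ∈ Finset.Icc 1 k,
                (if i = k+1 then 0 else if i = k then lam i + 1 else lam i)
                = lam i + (if i = k then 1 else 0) := by
              intro i hi
              have : i ≤ k := (Finset.mem_Icc.mp hi).2
              split_ifs <;> omega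
            rw [Finset.sum_congr rfl key, Finset.sum_add_distrib,
              Finset.sum_ite_eq' _ k (fun _ => 1), if_pos hmem]
          omega
        · rw [hIcc, Finset.sum_insert (by simp)]; beta_reduce; rw [if_pos rfl, zero_mul, zero_add]
          have he : (∑ i ∈ Finset.Icc 1 k,
              (if i = k+1 then 0 else if i = k then lam i + 1 else lam i) * Nat.fib (2*i))
              = (∑ i ∈ Finset.Icc 1 k, lam i * Nat.fib (2*i)) + Nat.fib (2*k) := by
            have key : ∀ i ∈ Finset.Icc 1 k,
                (if i = k+1 then 0 else if i = k then lam i + 1 else lam i) * Nat.fib (2*i)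
                = lam i * Nat.fib (2*i) + (if i = k then Nat.fib (2*k) else 0) := by
              intro i hi
              have : i ≤ k := (Finset.mem_Icc.mp hi).2
              by_cases h : i = k
              · simp only [h]
                rw [if_neg (by omega : ¬ (k:ℕ) = k+1)]
                simp only [ite_true]
                ring
              · rw [if_neg (by omega : ¬ i = k+1), if_neg h, if_neg h, add_zero]
            rw [Finset.sum_congr rfl key, Finset.sum_add_distrib,
              Finset.sum_ite_eq' _ k (fun _ => Nat.fib (2*k)), if_pos hmem]
          rw [he, hw]
          omega
end

section
/- Let F_k = {f_2, f_4, ..., f_{2k}}. The integer f_{2k+1} cannot be written as Σ_{i=1}^k λ_i f_{2i} with nonnegative integers λ_i satisfying Σ λ_i ≤ k. Consequently, the k-range of F_k is exactly f_{2k+1} - 1. -/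
section Aux
open Nat Finset

private lemma lt_fib_two_mul_add_two (n : ℕ) : n < Nat.fib (2*n+2) := by
  induction n with
  | zero => simp
  | succ n ih =>
    have h1 : 0 < Nat.fib (2*n+3) := by simp [Nat.fib_pos]
    have h2 : Nat.fib (2*(n+1)+2) = Nat.fib (2*n+2) + Nat.fib (2*n+3) := by
      rw [show 2*(n+1)+2 = (2*n+2)+2 by ring, Nat.fib_add_two]
    omega

/-- index of largest even-indexed Fibonacci number `≤ n` -/
def mx (n : ℕ) : ℕ := Nat.findGreatest (fun i => Nat.fib (2*i) ≤ n) n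

lemma mx_spec (n : ℕ) (hn : 1 ≤ n) :
    1 ≤ mx n ∧ Nat.fib (2 * mx n) ≤ n ∧ n < Nat.fib (2 * mx n + 2) := by
  have h1 : 1 ≤ mx n := Nat.le_findGreatest hn (by simpa using hn)
  have h2 : Nat.fib (2 * mx n) ≤ n :=
    Nat.findGreatest_spec (P := fun i => Nat.fib (2*i) ≤ n) hn (by simpa using hn)
  refine ⟨h1, h2, ?_⟩
  rcases eq_or_lt_of_le (Nat.findGreatest_le (P := fun i => Nat.fib (2*i) ≤ n) n) with h | h
  · have := lt_fib_two_mul_add_two n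
    calc n < Nat.fib (2*n+2) := this
    _ ≤ Nat.fib (2 * mx n + 2) := by
        apply Nat.fib_mono; unfold mx; omega
  · by_contra hc
    have hp : Nat.fib (2*(mx n + 1)) ≤ n := by
      rw [show 2*(mx n + 1) = 2 * mx n + 2 by ring]; omega
    exact Nat.findGreatest_is_greatest (P := fun i => Nat.fib (2*i) ≤ n)
      (Nat.lt_succ_self _) h hp

lemma mx_eq {M n : ℕ} (hM : 1 ≤ M) (h1 : Nat.fib (2*M) ≤ n) (h2 : n < Nat.fib (2*M+2)) :
    mx n = M := by
  have hf : 0 < Nat.fib (2*M) := Nat.fib_pos.mpr (by omega)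
  have hn : 1 ≤ n := by omega
  obtain ⟨g1, g2, g3⟩ := mx_spec n hn
  by_contra hne
  rcases Nat.lt_or_ge (mx n) M with h | h
  · have : Nat.fib (2 * mx n + 2) ≤ Nat.fib (2*M) := Nat.fib_mono (by omega)
    omega
  · have hMlt : M < mx n := by omega
    have : Nat.fib (2*M+2) ≤ Nat.fib (2 * mx n) := Nat.fib_mono (by omega)
    omega

def G : ℕ → ℕ
  | 0 => 0
  | (n+1) => 1 + G ((n+1) - Nat.fib (2 * mx (n+1)))
decreasing_by
  have h := mx_spec (n+1) (by omega)
  have : 0 < Nat.fib (2 * mx (n+1)) := Nat.fib_pos.mpr (by omega)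
  omega

@[simp] lemma G_zero : G 0 = 0 := by rw [G]

lemma G_succ (n : ℕ) : G (n+1) = 1 + G ((n+1) - Nat.fib (2 * mx (n+1))) := by rw [G]

lemma G_top {M r : ℕ} (hM : 1 ≤ M) (hr : r < Nat.fib (2*M+1)) :
    G (Nat.fib (2*M) + r) = 1 + G r := by
  have hfpos : 0 < Nat.fib (2*M) := Nat.fib_pos.mpr (by omega)
  have h2 : Nat.fib (2*M) + r < Nat.fib (2*M+2) := by
    have : Nat.fib (2*M+2) = Nat.fib (2*M) + Nat.fib (2*M+1) := Nat.fib_add_two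
    omega
  obtain ⟨t, ht⟩ : ∃ t, Nat.fib (2*M) + r = t + 1 := ⟨Nat.fib (2*M) + r - 1, by omega⟩
  rw [ht, G_succ, ← ht, mx_eq hM (by omega) h2]
  congr 1
  congr 1
  omega

lemma G_odd : ∀ j r : ℕ, r < Nat.fib (2*j+2) → G r ≤ G (Nat.fib (2*j+1) + r) := by
  intro j
  induction j with
  | zero =>
    intro r hr
    interval_cases r
    simp
  | succ j ih =>
    intro r hr
    have hadd4 : Nat.fib (2*(j+1)+2) = Nat.fib (2*j+2) + Nat.fib (2*j+3) := by
      rw [show 2*(j+1)+2 = (2*j+2)+2 by ring, Nat.fib_add_two]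
    rcases Nat.lt_or_ge r (Nat.fib (2*j+2)) with h | h
    · -- small r
      have key : Nat.fib (2*(j+1)+1) + r = Nat.fib (2*(j+1)) + (Nat.fib (2*j+1) + r) := by
        rw [show 2*(j+1)+1 = (2*j+1)+2 by ring, Nat.fib_add_two,
          show 2*(j+1) = 2*j+2 by ring]
        ring
      rw [key, G_top (by omega) (by
        rw [show 2*(j+1)+1 = (2*j+1)+2 by ring, Nat.fib_add_two,
          show (2*j+1)+1 = 2*j+2 by ring]
        omega)]
      have := ih r h
      omega
    · -- r = fib(2j+2) + r'
      obtain ⟨r', hr'⟩ : ∃ r', r = Nat.fib (2*j+2) + r' := ⟨r - Nat.fib (2*j+2), by omega⟩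
      have hr'lt : r' < Nat.fib (2*j+3) := by omega
      have e1 : G r = 1 + G r' := by
        rw [hr', show 2*j+2 = 2*(j+1) by ring, show 2*j+3 = 2*(j+1)+1 by ring] at *
        exact G_top (by omega) hr'lt
      have key : Nat.fib (2*(j+1)+1) + r = Nat.fib (2*(j+2)) + r' := by
        rw [hr', show 2*(j+2) = (2*(j+1)+1)+1 by ring]
        rw [show Nat.fib ((2*(j+1)+1)+1) = Nat.fib (2*(j+1)+1) + Nat.fib (2*j+2) by
          rw [show (2*(j+1)+1) = (2*j+2)+1 by ring, show ((2*j+2)+1)+1 = (2*j+2)+2 by ring,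
            Nat.fib_add_two]; ring]
        ring
      rw [key, G_top (by omega) (by
        calc r' < Nat.fib (2*j+3) := hr'lt
        _ ≤ Nat.fib (2*(j+2)+1) := Nat.fib_mono (by omega))]
      omega

lemma G_oddgap : ∀ d j r x : ℕ, 1 ≤ j → r < Nat.fib (2*j) →
    x + Nat.fib (2*j) = Nat.fib (2*(j+d)+1) → G r ≤ G (x + r) := by
  intro d
  induction d with
  | zero =>
    intro j r x hj hr hx
    obtain ⟨j', rfl⟩ : ∃ j', j = j' + 1 := ⟨j - 1, by omega⟩
    have h1 : Nat.fib (2*(j'+1)+1) = Nat.fib (2*j'+1) + Nat.fib (2*(j'+1)) := by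
      rw [show 2*(j'+1)+1 = (2*j'+1)+2 by ring, Nat.fib_add_two,
        show 2*(j'+1) = (2*j'+1)+1 by ring]
    have hxval : x = Nat.fib (2*j'+1) := by simp at hx; omega
    subst hxval
    exact G_odd j' r (by rw [show 2*j'+2 = 2*(j'+1) by ring]; exact hr)
  | succ d ih =>
    intro j r x hj hr hx
    have hmono : Nat.fib (2*j) ≤ Nat.fib (2*(j+d)+1) := Nat.fib_mono (by omega)
    obtain ⟨x0, hx0⟩ : ∃ x0, x0 + Nat.fib (2*j) = Nat.fib (2*(j+d)+1) :=
      ⟨Nat.fib (2*(j+d)+1) - Nat.fib (2*j), by omega⟩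
    have h1 : Nat.fib (2*(j+(d+1))+1) = Nat.fib (2*(j+d)+1) + Nat.fib (2*(j+d)+2) := by
      rw [show 2*(j+(d+1))+1 = (2*(j+d)+1)+2 by ring, Nat.fib_add_two]
    have hxdec : x = Nat.fib (2*(j+d+1)) + x0 := by
      have : Nat.fib (2*(j+d+1)) = Nat.fib (2*(j+d)+2) := by ring_nf
      omega
    rw [hxdec, add_assoc, G_top (by omega) (by
      calc x0 + r < x0 + Nat.fib (2*j) := by omega
      _ = Nat.fib (2*(j+d)+1) := hx0
      _ ≤ Nat.fib (2*(j+d+1)+1) := Nat.fib_mono (by omega))]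
    have := ih j r x0 hj hr hx0
    omega

lemma G_bellman : ∀ n j m : ℕ, 1 ≤ j → m + Nat.fib (2*j) = n → G n ≤ 1 + G m := by
  intro n
  induction n using Nat.strong_induction_on with
  | _ n IH =>
    intro j m hj hm
    have hfj : 0 < Nat.fib (2*j) := Nat.fib_pos.mpr (by omega)
    have hn1 : 1 ≤ n := by omega
    obtain ⟨hM1, hM2, hM3⟩ := mx_spec n hn1
    generalize hMdef : mx n = M at hM1 hM2 hM3
    have hfib2 : Nat.fib (2*M+2) = Nat.fib (2*M) + Nat.fib (2*M+1) := Nat.fib_add_two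
    have hfM : 0 < Nat.fib (2*M) := Nat.fib_pos.mpr (by omega)
    obtain ⟨r, hr⟩ : ∃ r, Nat.fib (2*M) + r = n := ⟨n - Nat.fib (2*M), by omega⟩
    have hrlt : r < Nat.fib (2*M+1) := by omega
    have hGn : G n = 1 + G r := by rw [← hr]; exact G_top hM1 hrlt
    have hjM : j ≤ M := by
      by_contra hc
      have : Nat.fib (2*M+2) ≤ Nat.fib (2*j) := Nat.fib_mono (by omega)
      omega
    rcases eq_or_lt_of_le hjM with hEq | hlt
    · have : m = r := by subst hEq; omega
      subst this
      omega
    · rcases Nat.lt_or_ge m (Nat.fib (2*M)) with hsmall | hbig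
      · -- hard case
        have hfjM : Nat.fib (2*j) ≤ Nat.fib (2*M) := Nat.fib_mono (by omega)
        have hrj : r < Nat.fib (2*j) := by omega
        obtain ⟨M', rfl⟩ : ∃ M', M = M' + 1 := ⟨M - 1, by omega⟩
        have hM'j : j ≤ M' := by omega
        have hsplit : Nat.fib (2*(M'+1)) = Nat.fib (2*M') + Nat.fib (2*M'+1) := by
          rw [show 2*(M'+1) = 2*M'+2 by ring, Nat.fib_add_two]
        have hmono' : Nat.fib (2*j) ≤ Nat.fib (2*M'+1) := Nat.fib_mono (by omega)
        obtain ⟨x0, hx0⟩ : ∃ x0, x0 + Nat.fib (2*j) = Nat.fib (2*M'+1) :=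
          ⟨Nat.fib (2*M'+1) - Nat.fib (2*j), by omega⟩
        have hmval : m = Nat.fib (2*M') + (x0 + r) := by omega
        have hGm : G m = 1 + G (x0 + r) := by
          rw [hmval]
          exact G_top (by omega) (by omega)
        have hkey : G r ≤ G (x0 + r) :=
          G_oddgap (M' - j) j r x0 hj hrj (by
            rw [show 2*(j+(M'-j))+1 = 2*M'+1 by omega]; exact hx0)
        omega
      · -- easy case
        obtain ⟨m', hm'⟩ : ∃ m', m = Nat.fib (2*M) + m' := ⟨m - Nat.fib (2*M), by omega⟩
        have hm'r : m' + Nat.fib (2*j) = r := by omega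
        have hGm : G m = 1 + G m' := by
          rw [hm']
          exact G_top hM1 (by omega)
        have hIH : G r ≤ 1 + G m' := IH r (by omega) j m' hj hm'r
        omega

lemma G_sum_le : ∀ s k : ℕ, ∀ lam : ℕ → ℕ, (∑ i ∈ Icc 1 k, lam i) ≤ s →
    G (∑ i ∈ Icc 1 k, lam i * Nat.fib (2*i)) ≤ s := by
  intro s
  induction s with
  | zero =>
    intro k lam h
    have h0 : ∀ i ∈ Icc 1 k, lam i = 0 := by
      intro i hi
      exact (Finset.sum_eq_zero_iff.mp (Nat.le_antisymm h (Nat.zero_le _))) i hi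
    rw [Finset.sum_eq_zero (fun i hi => by rw [h0 i hi]; ring)]
    simp
  | succ s ih =>
    intro k lam h
    by_cases hz : (∑ i ∈ Icc 1 k, lam i) = 0
    · have h0 : ∀ i ∈ Icc 1 k, lam i = 0 := fun i hi => (Finset.sum_eq_zero_iff.mp hz) i hi
      rw [Finset.sum_eq_zero (fun i hi => by rw [h0 i hi]; ring)]
      simp
    · obtain ⟨j, hjmem, hjne⟩ := Finset.exists_ne_zero_of_sum_ne_zero hz
      have hj1 : 1 ≤ j := (Finset.mem_Icc.mp hjmem).1
      set lam' := Function.update lam j (lam j - 1) with hlam'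
      have he : ∀ i ∈ (Icc 1 k).erase j, lam' i = lam i := fun i hi =>
        Function.update_of_ne (Finset.ne_of_mem_erase hi) _ _
      have e1 : ∑ i ∈ Icc 1 k, lam i = lam j + ∑ i ∈ (Icc 1 k).erase j, lam i :=
        (Finset.add_sum_erase _ _ hjmem).symm
      have e1' : ∑ i ∈ Icc 1 k, lam' i = (lam j - 1) + ∑ i ∈ (Icc 1 k).erase j, lam i := by
        rw [← Finset.add_sum_erase _ lam' hjmem, Finset.sum_congr rfl he]
        simp [hlam']
      have e2 : ∑ i ∈ Icc 1 k, lam i * Nat.fib (2*i)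
          = lam j * Nat.fib (2*j) + ∑ i ∈ (Icc 1 k).erase j, lam i * Nat.fib (2*i) :=
        (Finset.add_sum_erase _ _ hjmem).symm
      have e2' : ∑ i ∈ Icc 1 k, lam' i * Nat.fib (2*i)
          = (lam j - 1) * Nat.fib (2*j) + ∑ i ∈ (Icc 1 k).erase j, lam i * Nat.fib (2*i) := by
        rw [← Finset.add_sum_erase _ (fun i => lam' i * Nat.fib (2*i)) hjmem,
          Finset.sum_congr rfl (fun i hi => by rw [he i hi])]
        simp [hlam']
      obtain ⟨t, ht⟩ : ∃ t, lam j = t + 1 := ⟨lam j - 1, by omega⟩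
      have hmul : (lam j - 1) * Nat.fib (2*j) + Nat.fib (2*j) = lam j * Nat.fib (2*j) := by
        rw [ht, Nat.add_sub_cancel, add_mul, one_mul]
      have hkey : (∑ i ∈ Icc 1 k, lam' i * Nat.fib (2*i)) + Nat.fib (2*j)
          = ∑ i ∈ Icc 1 k, lam i * Nat.fib (2*i) := by omega
      have hb := G_bellman _ j _ hj1 hkey
      have hih := ih k lam' (by omega)
      omega

lemma G_fib_odd : ∀ k : ℕ, 1 ≤ k → G (Nat.fib (2*k+1)) = k + 1 := by
  intro k hk
  induction k, hk using Nat.le_induction with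
  | base =>
    have h3 : Nat.fib (2*1+1) = 2 := by decide
    have h2 : Nat.fib (2*1) = 1 := by decide
    have g2 : G 2 = 1 + G 1 := by
      have := G_top (M := 1) (r := 1) (by omega) (by omega)
      simpa [h2] using this
    have g1 : G 1 = 1 + G 0 := by
      have := G_top (M := 1) (r := 0) (by omega) (by rw [h3]; omega)
      simpa [h2] using this
    rw [h3]
    simp [g2, g1]
  | succ k hk ih =>
    have hsplit : Nat.fib (2*(k+1)+1) = Nat.fib (2*(k+1)) + Nat.fib (2*k+1) := by
      rw [show 2*(k+1)+1 = (2*k+1)+2 by ring, Nat.fib_add_two,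
        show 2*(k+1) = (2*k+1)+1 by ring]
      ring
    have hlt : Nat.fib (2*k+1) < Nat.fib (2*(k+1)+1) := by
      calc Nat.fib (2*k+1) < Nat.fib (2*k+2) := Nat.fib_lt_fib_succ (by omega)
      _ ≤ Nat.fib (2*(k+1)+1) := Nat.fib_mono (by omega)
    rw [hsplit, G_top (by omega) hlt, ih]
    ring

lemma cov : ∀ k : ℕ, 1 ≤ k → ∀ n : ℕ, 1 ≤ n → n < Nat.fib (2*k+1) →
    ∃ lam : ℕ → ℕ, (∑ i ∈ Icc 1 k, lam i) ≤ k ∧ (∑ i ∈ Icc 1 k, lam i * Nat.fib (2*i)) = n := by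
  intro k hk
  induction k, hk using Nat.le_induction with
  | base =>
    intro n hn1 hn2
    have h3 : Nat.fib (2*1+1) = 2 := by decide
    have : n = 1 := by omega
    subst this
    exact ⟨fun _ => 1, by simp, by simp⟩
  | succ k hk ih =>
    intro n hn1 hn2
    have f23 : Nat.fib (2*(k+1)+1) = Nat.fib (2*k+1) + Nat.fib (2*(k+1)) := by
      rw [show 2*(k+1)+1 = (2*k+1)+2 by ring, Nat.fib_add_two,
        show 2*(k+1) = (2*k+1)+1 by ring]
    have f22 : Nat.fib (2*(k+1)) = Nat.fib (2*k) + Nat.fib (2*k+1) := by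
      rw [show 2*(k+1) = (2*k)+2 by ring, Nat.fib_add_two]
    have hf2k : 0 < Nat.fib (2*k) := Nat.fib_pos.mpr (by omega)
    have hf2k1 : Nat.fib (2*k) < Nat.fib (2*k+1) := Nat.fib_lt_fib_succ (by omega)
    -- extension helper: sums of a function vanishing above k
    have ext : ∀ lam : ℕ → ℕ,
        (∑ i ∈ Icc 1 (k+1), (fun i => if i ≤ k then lam i else 0) i = ∑ i ∈ Icc 1 k, lam i)
        ∧ (∑ i ∈ Icc 1 (k+1), (fun i => if i ≤ k then lam i else 0) i * Nat.fib (2*i)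
            = ∑ i ∈ Icc 1 k, lam i * Nat.fib (2*i)) := by
      intro lam
      constructor
      · rw [Finset.sum_Icc_succ_top (by omega)]
        simp only [if_neg (by omega : ¬ (k+1 ≤ k)), add_zero]
        exact Finset.sum_congr rfl (fun i hi => if_pos (Finset.mem_Icc.mp hi).2)
      · rw [Finset.sum_Icc_succ_top (by omega)]
        simp only [if_neg (by omega : ¬ (k+1 ≤ k)), zero_mul, add_zero]
        exact Finset.sum_congr rfl (fun i hi => by rw [if_pos (Finset.mem_Icc.mp hi).2])
    -- indicator helper
    have ind : ∀ j : ℕ, j ∈ Icc 1 (k+1) →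
        (∑ i ∈ Icc 1 (k+1), (fun i => if i = j then 1 else 0) i = 1)
        ∧ (∑ i ∈ Icc 1 (k+1), (fun i => if i = j then 1 else 0) i * Nat.fib (2*i)
            = Nat.fib (2*j)) := by
      intro j hj
      constructor
      · rw [Finset.sum_ite_eq' (Icc 1 (k+1)) j (fun _ => 1), if_pos hj]
      · have : ∀ i, (if i = j then 1 else 0) * Nat.fib (2*i)
            = if i = j then Nat.fib (2*i) else 0 := by
          intro i; split <;> simp
        simp only [this]
        rw [Finset.sum_ite_eq' (Icc 1 (k+1)) j (fun i => Nat.fib (2*i)), if_pos hj]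
    rcases Nat.lt_or_ge n (Nat.fib (2*k+1)) with hcase | hcase
    · -- use induction directly
      obtain ⟨lam, h1, h2⟩ := ih n hn1 hcase
      refine ⟨fun i => if i ≤ k then lam i else 0, ?_, ?_⟩
      · rw [(ext lam).1]; omega
      · rw [(ext lam).2]; exact h2
    · rcases Nat.lt_or_ge n (Nat.fib (2*(k+1))) with hmid | hbig
      · -- fib(2k+1) ≤ n < fib(2k+2) : add one stamp fib(2k)
        obtain ⟨m, hm⟩ : ∃ m, n = Nat.fib (2*k) + m := ⟨n - Nat.fib (2*k), by omega⟩
        have hm1 : 1 ≤ m := by omega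
        have hm2 : m < Nat.fib (2*k+1) := by omega
        obtain ⟨lam, h1, h2⟩ := ih m hm1 hm2
        have hkmem : k ∈ Icc 1 (k+1) := Finset.mem_Icc.mpr (by omega)
        refine ⟨fun i => (if i ≤ k then lam i else 0) + (if i = k then 1 else 0), ?_, ?_⟩
        · rw [Finset.sum_add_distrib, (ext lam).1, (ind k hkmem).1]; omega
        · simp only [add_mul]
          rw [Finset.sum_add_distrib, (ext lam).2, (ind k hkmem).2, h2]
          omega
      · -- n ≥ fib(2k+2) : add one stamp fib(2k+2)
        obtain ⟨m, hm⟩ : ∃ m, n = Nat.fib (2*(k+1)) + m := ⟨n - Nat.fib (2*(k+1)), by omega⟩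
        have hm2 : m < Nat.fib (2*k+1) := by omega
        have hkmem : k+1 ∈ Icc 1 (k+1) := Finset.mem_Icc.mpr (by omega)
        rcases Nat.eq_zero_or_pos m with hm0 | hm1
        · refine ⟨fun i => if i = k+1 then 1 else 0, ?_, ?_⟩
          · rw [(ind (k+1) hkmem).1]; omega
          · rw [(ind (k+1) hkmem).2]; omega
        · obtain ⟨lam, h1, h2⟩ := ih m hm1 hm2
          refine ⟨fun i => (if i ≤ k then lam i else 0) + (if i = k+1 then 1 else 0), ?_, ?_⟩
          · rw [Finset.sum_add_distrib, (ext lam).1, (ind (k+1) hkmem).1]; omega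
          · simp only [add_mul]
            rw [Finset.sum_add_distrib, (ext lam).2, (ind (k+1) hkmem).2, h2]
            omega

lemma fib_even_inj (k : ℕ) : ∀ x ∈ Icc 1 k, ∀ y ∈ Icc 1 k,
    Nat.fib (2*x) = Nat.fib (2*y) → x = y := by
  have key : ∀ x y : ℕ, 1 ≤ x → x < y → Nat.fib (2*x) < Nat.fib (2*y) := by
    intro x y hx hxy
    calc Nat.fib (2*x) < Nat.fib (2*x+1) := Nat.fib_lt_fib_succ (by omega)
    _ ≤ Nat.fib (2*y) := Nat.fib_mono (by omega)
  intro x hx y hy h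
  simp only [Finset.mem_Icc] at hx hy
  rcases Nat.lt_trichotomy x y with hlt | heq | hgt
  · exact absurd h (Nat.ne_of_lt (key x y hx.1 hlt))
  · exact heq
  · exact absurd h.symm (Nat.ne_of_lt (key y x hy.1 hgt))

lemma reach_iff (k n : ℕ) :
    Reachable ((Finset.Icc 1 k).image (fun i => Nat.fib (2 * i))) k n ↔
    ∃ lam : ℕ → ℕ, (∑ i ∈ Icc 1 k, lam i) ≤ k ∧ (∑ i ∈ Icc 1 k, lam i * Nat.fib (2*i)) = n := by
  have inj := fib_even_inj k
  constructor
  · rintro ⟨f, h1, h2⟩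
    refine ⟨fun i => f (Nat.fib (2*i)), ?_, ?_⟩
    · rw [Finset.sum_image inj] at h1; exact h1
    · rw [Finset.sum_image inj] at h2; exact h2
  · rintro ⟨lam, h1, h2⟩
    refine ⟨fun v => ∑ i ∈ Icc 1 k, if Nat.fib (2*i) = v then lam i else 0, ?_, ?_⟩
    · rw [Finset.sum_image inj]
      calc (∑ j ∈ Icc 1 k, ∑ i ∈ Icc 1 k, if Nat.fib (2*i) = Nat.fib (2*j) then lam i else 0)
          = ∑ j ∈ Icc 1 k, lam j := by
            refine Finset.sum_congr rfl (fun j hj => ?_)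
            rw [Finset.sum_congr rfl (fun i hi => ?_), Finset.sum_ite_eq' (Icc 1 k) j lam,
              if_pos hj]
            congr 1
            exact propext ⟨fun h => inj i hi j hj h, fun h => by rw [h]⟩
      _ ≤ k := h1
    · rw [Finset.sum_image inj]
      calc (∑ j ∈ Icc 1 k, (∑ i ∈ Icc 1 k, if Nat.fib (2*i) = Nat.fib (2*j) then lam i else 0)
              * Nat.fib (2*j))
          = ∑ j ∈ Icc 1 k, lam j * Nat.fib (2*j) := by
            refine Finset.sum_congr rfl (fun j hj => ?_)
            congr 1
            rw [Finset.sum_congr rfl (fun i hi => ?_), Finset.sum_ite_eq' (Icc 1 k) j lam,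
              if_pos hj]
            congr 1
            exact propext ⟨fun h => inj i hi j hj h, fun h => by rw [h]⟩
      _ = n := h2

end Aux

theorem fib_basis_exact (k : ℕ) (hk : 0 < k) :
    (¬ ∃ lam : ℕ → ℕ, (∑ i ∈ Finset.Icc 1 k, lam i) ≤ k ∧
        (∑ i ∈ Finset.Icc 1 k, lam i * Nat.fib (2 * i)) = Nat.fib (2 * k + 1)) ∧
    srange ((Finset.Icc 1 k).image (fun i => Nat.fib (2 * i))) k
      = Nat.fib (2 * k + 1) - 1 := by
  have hk1 : 1 ≤ k := hk
  have part1 : ¬ ∃ lam : ℕ → ℕ, (∑ i ∈ Finset.Icc 1 k, lam i) ≤ k ∧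
      (∑ i ∈ Finset.Icc 1 k, lam i * Nat.fib (2 * i)) = Nat.fib (2 * k + 1) := by
    rintro ⟨lam, h1, h2⟩
    have hle := G_sum_le k k lam h1
    rw [h2] at hle
    have := G_fib_odd k hk1
    omega
  refine ⟨part1, ?_⟩
  have hfpos : 0 < Nat.fib (2*k+1) := Nat.fib_pos.mpr (by omega)
  have hg : IsGreatest {n | ∀ i, 1 ≤ i → i ≤ n →
      Reachable ((Finset.Icc 1 k).image (fun i => Nat.fib (2 * i))) k i}
      (Nat.fib (2*k+1) - 1) := by
    constructor
    · intro i hi1 hi2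
      exact (reach_iff k i).mpr (cov k hk1 i hi1 (by omega))
    · intro n hn
      by_contra hcon
      push_neg at hcon
      have hreach := hn (Nat.fib (2*k+1)) (by omega) (by omega)
      exact part1 ((reach_iff k _).mp hreach)
  simpa [srange] using hg.csSup_eq
end

section
/- For k ≤ s with s = qk + r (Euclidean division, 0 ≤ r < k), the s-range of the Fibonacci basis F_k = {f_{2i} : 1 ≤ i ≤ k} satisfies n_s(F_k) ≥ q·(f_{2k+1} - 1) + f_{2r+1} - 1. -/
lemma reach_mono {A : Finset ℕ} {s t i : ℕ} (hst : s ≤ t) (h : Reachable A s i) :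
    Reachable A t i := by
  obtain ⟨f, h1, h2⟩ := h
  exact ⟨f, h1.trans hst, h2⟩

lemma reach_zero (A : Finset ℕ) (s : ℕ) : Reachable A s 0 :=
  ⟨fun _ => 0, by simp, by simp⟩

lemma reach_single {A : Finset ℕ} {a : ℕ} (ha : a ∈ A) {s : ℕ} (hs : 1 ≤ s) :
    Reachable A s a := by
  refine ⟨fun x => if x = a then 1 else 0, ?_, ?_⟩
  · rw [Finset.sum_ite_eq' A a (fun _ => 1)]
    simp [ha, hs]
  · have : ∀ x, (if x = a then 1 else 0) * x = if x = a then a else 0 := by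
      intro x; split <;> simp_all
    simp_rw [this]
    rw [Finset.sum_ite_eq' A a (fun _ => a)]
    simp [ha]

lemma reach_add {A : Finset ℕ} {s t i j : ℕ} (h1 : Reachable A s i) (h2 : Reachable A t j) :
    Reachable A (s + t) (i + j) := by
  obtain ⟨f, hf1, hf2⟩ := h1
  obtain ⟨g, hg1, hg2⟩ := h2
  refine ⟨fun x => f x + g x, ?_, ?_⟩
  · rw [Finset.sum_add_distrib]; exact Nat.add_le_add hf1 hg1
  · simp_rw [add_mul]; rw [Finset.sum_add_distrib, hf2, hg2]

def FA (k : ℕ) : Finset ℕ := (Finset.Icc 1 k).image (fun i => Nat.fib (2 * i))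

lemma mem_FA {k m : ℕ} (h1 : 1 ≤ m) (h2 : m ≤ k) : Nat.fib (2 * m) ∈ FA k := by
  exact Finset.mem_image.2 ⟨m, Finset.mem_Icc.2 ⟨h1, h2⟩, rfl⟩

/-- Base lemma: every `i ∈ [1, fib (2m+1) - 1]` is a sum of at most `m` elements of `FA k`,
for `1 ≤ m ≤ k`. -/
lemma base (k : ℕ) : ∀ m, 1 ≤ m → m ≤ k → ∀ i, 1 ≤ i → i ≤ Nat.fib (2 * m + 1) - 1 →
    Reachable (FA k) m i := by
  intro m
  induction m with
  | zero => omega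
  | succ n ih =>
    intro _ hmk i hi1 hi2
    have hidx : 2 * (n + 1) + 1 = 2 * n + 3 := by ring
    rw [hidx] at hi2
    have hfib3 : Nat.fib (2 * n + 3) = Nat.fib (2 * n + 1) + Nat.fib (2 * n + 2) :=
      Nat.fib_add_two
    have hfib2 : Nat.fib (2 * n + 2) = Nat.fib (2 * n) + Nat.fib (2 * n + 1) :=
      Nat.fib_add_two
    have hstamp : Reachable (FA k) 1 (Nat.fib (2 * n + 2)) := by
      have := reach_single (mem_FA (m := n + 1) (by omega) hmk) le_rfl
      rw [show 2 * (n + 1) = 2 * n + 2 from by ring] at this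
      exact this
    by_cases hbig : Nat.fib (2 * n + 2) ≤ i
    · set rem := i - Nat.fib (2 * n + 2) with hrem
      rcases Nat.eq_zero_or_pos rem with h0 | hpos
      · have : i = Nat.fib (2 * n + 2) := by omega
        rw [this]
        exact reach_mono (by omega) hstamp
      · have hn1 : 1 ≤ n := by
          by_contra h
          have hn0 : n = 0 := by omega
          rw [hn0] at hi2 hrem
          norm_num [Nat.fib] at hi2 hrem
          omega
        have hremle : rem ≤ Nat.fib (2 * n + 1) - 1 := by omega
        have hrec := ih hn1 (by omega) rem hpos hremle
        have h := reach_add hrec hstamp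
        have hsum : rem + Nat.fib (2 * n + 2) = i := by omega
        rw [hsum] at h
        exact h
    · push_neg at hbig
      by_cases hsmall : i ≤ Nat.fib (2 * n + 1) - 1
      · have hn1 : 1 ≤ n := by
          by_contra h
          have hn0 : n = 0 := by omega
          rw [hn0] at hsmall
          simp [Nat.fib] at hsmall
          omega
        exact reach_mono (by omega) (ih hn1 (by omega) i hi1 hsmall)
      · push_neg at hsmall
        have hilo : Nat.fib (2 * n + 1) ≤ i := by omega
        have hn1 : 1 ≤ n := by
          by_contra h
          have hn0 : n = 0 := by omega
          rw [hn0] at hilo hbig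
          simp [Nat.fib] at hilo hbig
          omega
        have hmono : Nat.fib (2 * n) < Nat.fib (2 * n + 1) :=
          Nat.fib_lt_fib_succ (by omega)
        set rem := i - Nat.fib (2 * n) with hrem
        have hpos : 1 ≤ rem := by omega
        have hremle : rem ≤ Nat.fib (2 * n + 1) - 1 := by omega
        have hrec := ih hn1 (by omega) rem hpos hremle
        have hstamp2 : Reachable (FA k) 1 (Nat.fib (2 * n)) :=
          reach_single (mem_FA hn1 (by omega)) le_rfl
        have h := reach_add hrec hstamp2
        have hsum : rem + Nat.fib (2 * n) = i := by omega
        rw [hsum] at h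
        exact h

lemma outer (k r : ℕ) (hk : 1 ≤ k) (hr : r < k) :
    ∀ q i, 1 ≤ i → i ≤ q * (Nat.fib (2 * k + 1) - 1) + (Nat.fib (2 * r + 1) - 1) →
    Reachable (FA k) (q * k + r) i := by
  intro q
  induction q with
  | zero =>
    intro i hi1 hi2
    simp only [Nat.zero_mul, Nat.zero_add] at hi2 ⊢
    have hr1 : 1 ≤ r := by
      by_contra h
      have : r = 0 := by omega
      simp [this] at hi2
      omega
    exact base k r hr1 (le_of_lt hr) i hi1 hi2
  | succ q ih =>
    intro i hi1 hi2
    by_cases hcase : i ≤ Nat.fib (2 * k + 1) - 1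
    · exact reach_mono (by nlinarith) (base k k hk le_rfl i hi1 hcase)
    · push_neg at hcase
      have hfk : 2 ≤ Nat.fib (2 * k + 1) := by
        calc 2 = Nat.fib 3 := by simp [Nat.fib]
        _ ≤ Nat.fib (2 * k + 1) := Nat.fib_mono (by omega)
      set rem := i - (Nat.fib (2 * k + 1) - 1) with hrem
      have h1 : 1 ≤ rem := by omega
      have h2 : rem ≤ q * (Nat.fib (2 * k + 1) - 1) + (Nat.fib (2 * r + 1) - 1) := by
        have : (q + 1) * (Nat.fib (2 * k + 1) - 1)
            = q * (Nat.fib (2 * k + 1) - 1) + (Nat.fib (2 * k + 1) - 1) := by ring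
        omega
      have hblock : Reachable (FA k) k (Nat.fib (2 * k + 1) - 1) :=
        base k k hk le_rfl _ (by omega) le_rfl
      have := reach_add (ih rem h1 h2) hblock
      have hsum : rem + (Nat.fib (2 * k + 1) - 1) = i := by omega
      rw [hsum] at this
      have heq : q * k + r + k = (q + 1) * k + r := by ring
      rw [heq] at this
      exact this

theorem fib_basis_srange_lower (k s q r : ℕ) (hk : 0 < k) (hks : k ≤ s)
    (hdiv : s = q * k + r) (hr : r < k) :
    srange ((Finset.Icc 1 k).image (fun i => Nat.fib (2 * i))) s
      ≥ q * (Nat.fib (2 * k + 1) - 1) + Nat.fib (2 * r + 1) - 1 := by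
  have hfr : 1 ≤ Nat.fib (2 * r + 1) := Nat.fib_pos.2 (by omega)
  set N := q * (Nat.fib (2 * k + 1) - 1) + Nat.fib (2 * r + 1) - 1 with hN
  have hNeq : N = q * (Nat.fib (2 * k + 1) - 1) + (Nat.fib (2 * r + 1) - 1) := by omega
  have hmem : N ∈ {n | ∀ i, 1 ≤ i → i ≤ n → Reachable (FA k) s i} := by
    intro i hi1 hi2
    rw [hdiv]
    exact outer k r hk hr q i hi1 (by omega)
  have hbdd : BddAbove {n | ∀ i, 1 ≤ i → i ≤ n → Reachable (FA k) s i} := by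
    refine ⟨s * Nat.fib (2 * k), ?_⟩
    intro n hn
    rcases Nat.eq_zero_or_pos n with h0 | hpos
    · omega
    · obtain ⟨f, hf1, hf2⟩ := hn n hpos le_rfl
      calc n = ∑ x ∈ FA k, f x * x := hf2.symm
        _ ≤ ∑ x ∈ FA k, f x * Nat.fib (2 * k) := by
            apply Finset.sum_le_sum
            intro x hx
            obtain ⟨j, hj, hjx⟩ := Finset.mem_image.1 hx
            have : x ≤ Nat.fib (2 * k) := by
              rw [← hjx]
              exact Nat.fib_mono (by simp [Finset.mem_Icc] at hj; omega)
            exact Nat.mul_le_mul_left _ this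
        _ = (∑ x ∈ FA k, f x) * Nat.fib (2 * k) := by rw [Finset.sum_mul]
        _ ≤ s * Nat.fib (2 * k) := Nat.mul_le_mul_right _ hf1
  exact le_csSup hbdd hmem
end

section
/- For all positive integers k_1, k_2, s_1, s_2, the extremal ranges satisfy n_{s_1+s_2}(k_1+k_2) ≥ (n_{s_1}(k_1) + 1)(n_{s_2}(k_2) + 1) - 1. -/
lemma reach_mono_s10 {C C' : Finset ℕ} (h : C ⊆ C') {s i : ℕ} (hr : Reachable C s i) :
    Reachable C' s i := by
  classical
  obtain ⟨f, hf1, hf2⟩ := hr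
  refine ⟨fun x => if x ∈ C then f x else 0, ?_, ?_⟩
  · calc ∑ x ∈ C', (if x ∈ C then f x else 0) = ∑ x ∈ C' ∩ C, f x :=
          Finset.sum_ite_mem _ _ _
    _ = ∑ x ∈ C, f x := by rw [Finset.inter_eq_right.mpr h]
    _ ≤ s := hf1
  · calc ∑ x ∈ C', (if x ∈ C then f x else 0) * x
        = ∑ x ∈ C', (if x ∈ C then f x * x else 0) := by
          refine Finset.sum_congr rfl fun x _ => ?_
          split <;> simp
    _ = ∑ x ∈ C' ∩ C, f x * x := Finset.sum_ite_mem _ _ _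
    _ = ∑ x ∈ C, f x * x := by rw [Finset.inter_eq_right.mpr h]
    _ = i := hf2

lemma cover_le {A : Finset ℕ} {s n : ℕ}
    (hn : ∀ i, 1 ≤ i → i ≤ n → Reachable A s i) : n ≤ (s + 1) ^ A.card := by
  classical
  have key : ∀ i, ∃ f : ℕ → ℕ,
      1 ≤ i → i ≤ n → (∑ x ∈ A, f x) ≤ s ∧ (∑ x ∈ A, f x * x) = i := by
    intro i
    by_cases h : 1 ≤ i ∧ i ≤ n
    · obtain ⟨f, hf⟩ := hn i h.1 h.2; exact ⟨f, fun _ _ => hf⟩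
    · exact ⟨0, fun h1 h2 => absurd ⟨h1, h2⟩ h⟩
  choose F hF using key
  set G : ℕ → (↥A → Fin (s + 1)) := fun i a => ⟨min (F i a) s, by omega⟩ with hG
  have hinj : Set.InjOn G (Finset.Icc 1 n) := by
    intro i hi j hj hij
    simp only [Finset.coe_Icc, Set.mem_Icc] at hi hj
    obtain ⟨hi1, hi2⟩ := hi; obtain ⟨hj1, hj2⟩ := hj
    obtain ⟨hFi1, hFi2⟩ := hF i hi1 hi2
    obtain ⟨hFj1, hFj2⟩ := hF j hj1 hj2
    have hagree : ∀ a ∈ A, F i a = F j a := by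
      intro a ha
      have h1 : F i a ≤ s :=
        le_trans (Finset.single_le_sum (fun x _ => Nat.zero_le (F i x)) ha) hFi1
      have h2 : F j a ≤ s :=
        le_trans (Finset.single_le_sum (fun x _ => Nat.zero_le (F j x)) ha) hFj1
      have := congrFun hij ⟨a, ha⟩
      simp only [hG, Fin.mk.injEq] at this
      omega
    rw [← hFi2, ← hFj2]
    exact Finset.sum_congr rfl fun a ha => by rw [hagree a ha]
  have hcard := Finset.card_le_card_of_injOn G (fun a _ => Finset.mem_univ _) hinj
  have : (Finset.Icc 1 n).card = n := by simp
  rw [this] at hcard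
  calc n ≤ (Finset.univ : Finset (↥A → Fin (s + 1))).card := hcard
    _ = (s + 1) ^ A.card := by
      simp [Finset.card_univ, Fintype.card_fun]

lemma srange_bdd (A : Finset ℕ) (s : ℕ) :
    BddAbove {n | ∀ i, 1 ≤ i → i ≤ n → Reachable A s i} :=
  ⟨(s + 1) ^ A.card, fun n hn => cover_le hn⟩

lemma srange_spec (A : Finset ℕ) (s : ℕ) :
    ∀ i, 1 ≤ i → i ≤ srange A s → Reachable A s i := by
  have h0 : (0 : ℕ) ∈ {n | ∀ i, 1 ≤ i → i ≤ n → Reachable A s i} := by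
    intro i h1 h2; omega
  exact Nat.sSup_mem ⟨0, h0⟩ (srange_bdd A s)

lemma reach_of_le (A : Finset ℕ) (s : ℕ) {j : ℕ} (hj : j ≤ srange A s) : Reachable A s j := by
  rcases Nat.eq_zero_or_pos j with h | h
  · exact ⟨0, by simp, by simp [h]⟩
  · exact srange_spec A s j h hj

lemma le_srange {A : Finset ℕ} {s n : ℕ} (h : ∀ i, 1 ≤ i → i ≤ n → Reachable A s i) :
    n ≤ srange A s := le_csSup (srange_bdd A s) h

lemma srange_le_exrange {A : Finset ℕ} {k s : ℕ} (hc : A.card = k) (hp : ∀ a ∈ A, 0 < a) :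
    srange A s ≤ exrange k s := by
  apply le_csSup
  · refine ⟨(s + 1) ^ k, fun n hn => ?_⟩
    obtain ⟨B, hB, hBp, rfl⟩ := hn
    simpa [hB] using cover_le (srange_spec B s)
  · exact ⟨A, hc, hp, rfl⟩

lemma exrange_mem (k s : ℕ) :
    ∃ A : Finset ℕ, A.card = k ∧ (∀ a ∈ A, 0 < a) ∧ exrange k s = srange A s := by
  have hne : Set.Nonempty {n | ∃ A : Finset ℕ, A.card = k ∧ (∀ a ∈ A, 0 < a) ∧ n = srange A s} :=
    ⟨srange (Finset.Icc 1 k) s, Finset.Icc 1 k, by simp,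
      fun a ha => by simp at ha; omega, rfl⟩
  have hbdd : BddAbove {n | ∃ A : Finset ℕ, A.card = k ∧ (∀ a ∈ A, 0 < a) ∧ n = srange A s} := by
    refine ⟨(s + 1) ^ k, fun n hn => ?_⟩
    obtain ⟨B, hB, hBp, rfl⟩ := hn
    simpa [hB] using cover_le (srange_spec B s)
  exact Nat.sSup_mem hne hbdd

theorem mrose_extremal (k₁ k₂ s₁ s₂ : ℕ)
    (hk₁ : 0 < k₁) (hk₂ : 0 < k₂) (hs₁ : 0 < s₁) (hs₂ : 0 < s₂) :
    exrange (k₁ + k₂) (s₁ + s₂) ≥ (exrange k₁ s₁ + 1) * (exrange k₂ s₂ + 1) - 1 := by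
  classical
  obtain ⟨A₁, hc₁, hp₁, he₁⟩ := exrange_mem k₁ s₁
  obtain ⟨A₂, hc₂, hp₂, he₂⟩ := exrange_mem k₂ s₂
  set m₁ := srange A₁ s₁ with hm₁
  set m₂ := srange A₂ s₂ with hm₂
  set B := A₂.image (fun b => (m₁ + 1) * b) with hBdef
  set C := A₁ ∪ B with hCdef
  have hsubA : A₁ ⊆ C := Finset.subset_union_left
  have hsubB : B ⊆ C := Finset.subset_union_right
  have hinj2 : Set.InjOn (fun b => (m₁ + 1) * b) A₂ := fun a _ b _ h =>
    Nat.eq_of_mul_eq_mul_left (by omega) h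
  -- the key covering property of C
  have hcov : ∀ i, 1 ≤ i → i ≤ (m₁ + 1) * (m₂ + 1) - 1 → Reachable C (s₁ + s₂) i := by
    intro i hi1 hi2
    set q := i / (m₁ + 1) with hqdef
    set r := i % (m₁ + 1) with hrdef
    have hr : r ≤ m₁ := by
      have := Nat.mod_lt i (show 0 < m₁ + 1 by omega); omega
    have hq : q ≤ m₂ := by
      have hlt : i < (m₂ + 1) * (m₁ + 1) := by
        have h1 : 1 ≤ (m₁ + 1) * (m₂ + 1) := Nat.one_le_iff_ne_zero.mpr (by positivity)
        have : (m₁ + 1) * (m₂ + 1) = (m₂ + 1) * (m₁ + 1) := Nat.mul_comm _ _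
        omega
      have := (Nat.div_lt_iff_lt_mul (show 0 < m₁ + 1 by omega)).mpr hlt
      omega
    obtain ⟨f₁, hf₁1, hf₁2⟩ := reach_of_le A₁ s₁ hr
    obtain ⟨f₂, hf₂1, hf₂2⟩ := reach_of_le A₂ s₂ hq
    refine ⟨fun x => (if x ∈ A₁ then f₁ x else 0) + (if x ∈ B then f₂ (x / (m₁ + 1)) else 0),
      ?_, ?_⟩
    · have e1 : ∑ x ∈ C, (if x ∈ A₁ then f₁ x else 0) = ∑ x ∈ A₁, f₁ x := by
        rw [Finset.sum_ite_mem, Finset.inter_eq_right.mpr hsubA]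
      have e2 : ∑ x ∈ C, (if x ∈ B then f₂ (x / (m₁ + 1)) else 0) = ∑ b ∈ A₂, f₂ b := by
        rw [Finset.sum_ite_mem, Finset.inter_eq_right.mpr hsubB, hBdef,
          Finset.sum_image hinj2]
        exact Finset.sum_congr rfl fun b _ => by
          rw [Nat.mul_div_cancel_left b (show 0 < m₁ + 1 by omega)]
      rw [Finset.sum_add_distrib, e1, e2]
      omega
    · have e1 : ∑ x ∈ C, (if x ∈ A₁ then f₁ x else 0) * x = ∑ x ∈ A₁, f₁ x * x := by
        have : ∀ x ∈ C, (if x ∈ A₁ then f₁ x else 0) * x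
            = (if x ∈ A₁ then f₁ x * x else 0) := by
          intro x _; split <;> simp
        rw [Finset.sum_congr rfl this, Finset.sum_ite_mem, Finset.inter_eq_right.mpr hsubA]
      have e2 : ∑ x ∈ C, (if x ∈ B then f₂ (x / (m₁ + 1)) else 0) * x
          = (m₁ + 1) * ∑ b ∈ A₂, f₂ b * b := by
        have : ∀ x ∈ C, (if x ∈ B then f₂ (x / (m₁ + 1)) else 0) * x
            = (if x ∈ B then f₂ (x / (m₁ + 1)) * x else 0) := by
          intro x _; split <;> simp
        rw [Finset.sum_congr rfl this, Finset.sum_ite_mem, Finset.inter_eq_right.mpr hsubB,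
          hBdef, Finset.sum_image hinj2, Finset.mul_sum]
        exact Finset.sum_congr rfl fun b _ => by
          rw [Nat.mul_div_cancel_left b (show 0 < m₁ + 1 by omega)]; ring
      have hmul : ∀ x, ((if x ∈ A₁ then f₁ x else 0) + (if x ∈ B then f₂ (x / (m₁ + 1)) else 0)) * x
          = (if x ∈ A₁ then f₁ x else 0) * x + (if x ∈ B then f₂ (x / (m₁ + 1)) else 0) * x :=
        fun x => add_mul _ _ _
      calc ∑ x ∈ C, ((if x ∈ A₁ then f₁ x else 0) + (if x ∈ B then f₂ (x / (m₁ + 1)) else 0)) * x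
          = ∑ x ∈ C, ((if x ∈ A₁ then f₁ x else 0) * x
              + (if x ∈ B then f₂ (x / (m₁ + 1)) else 0) * x) :=
            Finset.sum_congr rfl fun x _ => hmul x
        _ = r + (m₁ + 1) * q := by rw [Finset.sum_add_distrib, e1, e2, hf₁2, hf₂2]
        _ = (m₁ + 1) * q + r := add_comm _ _
        _ = i := Nat.div_add_mod i (m₁ + 1)
  -- pad C to have exactly k₁ + k₂ elements
  have hBcard : B.card = k₂ := by
    rw [hBdef, Finset.card_image_of_injOn hinj2, hc₂]
  have hCcard : C.card ≤ k₁ + k₂ := by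
    calc C.card ≤ A₁.card + B.card := Finset.card_union_le _ _
      _ = k₁ + k₂ := by rw [hc₁, hBcard]
  set M := C.sup id with hMdef
  set P := (Finset.range (k₁ + k₂ - C.card)).image (fun j => M + 1 + j) with hPdef
  have hPinj : Set.InjOn (fun j => M + 1 + j) (Finset.range (k₁ + k₂ - C.card)) :=
    fun a _ b _ h => by dsimp only at h; omega
  have hdisj : Disjoint C P := by
    rw [Finset.disjoint_left]
    intro x hxC hxP
    have h1 : x ≤ M := Finset.le_sup (f := id) hxC
    rw [hPdef, Finset.mem_image] at hxP
    obtain ⟨j, _, hj⟩ := hxP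
    omega
  set C' := C ∪ P with hC'def
  have hC'card : C'.card = k₁ + k₂ := by
    rw [hC'def, Finset.card_union_of_disjoint hdisj, hPdef,
      Finset.card_image_of_injOn hPinj, Finset.card_range]
    omega
  have hC'pos : ∀ a ∈ C', 0 < a := by
    intro a ha
    rw [hC'def, Finset.mem_union] at ha
    rcases ha with ha | ha
    · rw [hCdef, Finset.mem_union] at ha
      rcases ha with ha | ha
      · exact hp₁ a ha
      · rw [hBdef, Finset.mem_image] at ha
        obtain ⟨b, hb, rfl⟩ := ha
        have := hp₂ b hb
        positivity
    · rw [hPdef, Finset.mem_image] at ha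
      obtain ⟨j, _, rfl⟩ := ha
      omega
  have h1 : (m₁ + 1) * (m₂ + 1) - 1 ≤ srange C' (s₁ + s₂) :=
    le_srange fun i hi1 hi2 =>
      reach_mono_s10 Finset.subset_union_left (hcov i hi1 hi2)
  have h2 : srange C' (s₁ + s₂) ≤ exrange (k₁ + k₂) (s₁ + s₂) :=
    srange_le_exrange hC'card hC'pos
  rw [ge_iff_le, he₁, he₂]
  omega
end

section
/- For any basis A_k = {1 = a_1 < a_2 < ... < a_k} and number of stamps s, if for an integer t the minimal number of stamps needed to represent t is m ≤ s, and a_l is the largest denomination appearing in some minimal representation of t maximizing the largest used denomination, then t - a_l has minimal representation using exactly m - 1 stamps, all of which are ≤ a_l. -/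
/-- `M` is a representation of `t` from the basis `A`. -/
def IsRepr (A : Finset ℕ) (t : ℕ) (M : Multiset ℕ) : Prop :=
  (∀ x ∈ M, x ∈ A) ∧ M.sum = t

theorem minimal_repr_step (A : Finset ℕ) (h1 : 1 ∈ A) (hpos : ∀ a ∈ A, 0 < a)
    (s t m : ℕ) (hms : m ≤ s) (hm0 : 0 < m)
    (hm : IsLeast {n | ∃ M : Multiset ℕ, IsRepr A t M ∧ M.card = n} m)
    (M : Multiset ℕ) (hM : IsRepr A t M) (hcard : M.card = m)
    (l : ℕ) (hl : l ∈ M) (hmaxM : ∀ x ∈ M, x ≤ l)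
    (hbest : ∀ M' : Multiset ℕ, IsRepr A t M' → M'.card = m → ∀ x ∈ M', x ≤ l) :
    IsLeast {n | ∃ M' : Multiset ℕ,
      IsRepr A (t - l) M' ∧ (∀ x ∈ M', x ≤ l) ∧ M'.card = n} (m - 1) := by
  obtain ⟨hMA, hMsum⟩ := hM
  have hcons : l ::ₘ M.erase l = M := Multiset.cons_erase hl
  have hsum : l + (M.erase l).sum = t := by
    rw [← hMsum]; conv_rhs => rw [← hcons, Multiset.sum_cons]
  constructor
  · refine ⟨M.erase l, ⟨fun x hx => hMA x (Multiset.mem_of_mem_erase hx), ?_⟩,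
      fun x hx => hmaxM x (Multiset.mem_of_mem_erase hx), ?_⟩
    · omega
    · rw [Multiset.card_erase_of_mem hl, hcard]; rfl
  · rintro n ⟨M', ⟨hM'A, hM'sum⟩, _, hM'card⟩
    have hlt : l ≤ t := by omega
    have := hm.2 ⟨l ::ₘ M', ⟨fun x hx => by
        rcases Multiset.mem_cons.mp hx with h | h
        · exact h ▸ hMA l hl
        · exact hM'A x h, by rw [Multiset.sum_cons]; omega⟩, rfl⟩
    rw [Multiset.card_cons, hM'card] at this
    omega
end
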